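/- arXiv:1911.07826 — 2 statements merged into one kernel-verified Lean document; each statement's English description precedes it below -/
import Mathlib

section
/- Let X be a real Banach space, Y a closed subspace of X, and Z a weak*-closed subspace of X* that is norm-attaining for Y. If in addition Y^⊥ ∩ Z = {0}, then Y + Z^⊤ = X. -/
/-! Norm attainment gives `‖y‖ ≤ f (y + w) ≤ ‖y + w‖` for `y ∈ Y`, `w ∈ Z^⊤` and a suitable norm-one
`f ∈ Z`, so addition `Y × Z^⊤ → X` is bounded below and `Y + Z^⊤` is closed. A functional
annihilating `Y + Z^⊤` vanishes on `Z^⊤`, so it lies in the weak*-closed `Z` (bipolar theorem), and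
it vanishes on `Y`, so it is zero. Hahn–Banach then gives `Y + Z^⊤ = X`. -/

/-- A subspace `Z` of the dual of `X` is **weak*-closed** if its image in `WeakDual ℝ X`
is closed in the weak-* topology. -/
def WeakStarClosed {X : Type*} [NormedAddCommGroup X] [NormedSpace ℝ X]
    (Z : Submodule ℝ (X →L[ℝ] ℝ)) : Prop :=
  IsClosed (StrongDual.toWeakDual '' (Z : Set (X →L[ℝ] ℝ)) : Set (WeakDual ℝ X))

/-- `Z ⊆ X*` is **norm-attaining for** the subspace `Y ⊆ X` if every norm-one element of `Y`
is sent to `1` by some norm-one functional in `Z`. -/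
def NormAttainingFor {X : Type*} [NormedAddCommGroup X] [NormedSpace ℝ X]
    (Y : Submodule ℝ X) (Z : Submodule ℝ (X →L[ℝ] ℝ)) : Prop :=
  ∀ y ∈ Y, ‖y‖ = 1 → ∃ f ∈ Z, ‖f‖ = 1 ∧ f y = 1

/-- The **pre-annihilator** `Z^⊤` of a subspace `Z` of the dual of `X`. -/
def preAnn {X : Type*} [NormedAddCommGroup X] [NormedSpace ℝ X]
    (Z : Submodule ℝ (X →L[ℝ] ℝ)) : Submodule ℝ X where
  carrier := {x | ∀ f ∈ Z, f x = 0}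
  add_mem' := by intro a b ha hb f hf; simp [ha f hf, hb f hf]
  zero_mem' := by intro f hf; simp
  smul_mem' := by intro c x hx f hf; simp [hx f hf]

open scoped NNReal

section Separation

variable {E : Type*} [AddCommGroup E] [Module ℝ E] [TopologicalSpace E]
  [IsTopologicalAddGroup E] [ContinuousSMul ℝ E] [LocallyConvexSpace ℝ E]

theorem Submodule.exists_strongDual_eq_zero_of_notMem {M : Submodule ℝ E}
    (hM : IsClosed (M : Set E)) {x : E} (hx : x ∉ M) :
    ∃ f : StrongDual ℝ E, (∀ m ∈ M, f m = 0) ∧ f x ≠ 0 := by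
  obtain ⟨f, u, hfM, hux⟩ := geometric_hahn_banach_closed_point M.convex hM hx
  have hu : 0 < u := by simpa using hfM 0 M.zero_mem
  refine ⟨f, fun m hm => ?_, (hu.trans hux).ne'⟩
  -- `f` is bounded above by `u` on `M`, so it cannot take a nonzero value there
  by_contra hfm
  have := hfM ((u / f m) • m) (M.smul_mem _ hm)
  rw [map_smul, smul_eq_mul, div_mul_cancel₀ _ hfm] at this
  exact this.false

theorem Submodule.eq_top_of_isClosed_of_forall_strongDual {M : Submodule ℝ E}
    (hM : IsClosed (M : Set E)) (h : ∀ f : StrongDual ℝ E, (∀ m ∈ M, f m = 0) → f = 0) :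
    M = ⊤ := by
  refine Submodule.eq_top_iff'.2 fun x => ?_
  by_contra hx
  obtain ⟨f, hfM, hfx⟩ := M.exists_strongDual_eq_zero_of_notMem hM hx
  exact hfx (by rw [h f hfM, zero_apply])

end Separation

theorem Submodule.isClosed_sup_of_norm_le_mul_norm_add {𝕜 E : Type*} [NontriviallyNormedField 𝕜]
    [NormedAddCommGroup E] [NormedSpace 𝕜 E] [CompleteSpace E] {Y W : Submodule 𝕜 E}
    (hY : IsClosed (Y : Set E)) (hW : IsClosed (W : Set E)) (C : ℝ≥0)
    (h : ∀ y ∈ Y, ∀ w ∈ W, ‖y‖ ≤ C * ‖y + w‖) :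
    IsClosed ((Y ⊔ W : Submodule 𝕜 E) : Set E) := by
  have : CompleteSpace Y := hY.completeSpace_coe
  have : CompleteSpace W := hW.completeSpace_coe
  let T : Y × W →L[𝕜] E := Y.subtypeL.coprod W.subtypeL
  have hT : Y ⊔ W = LinearMap.range (T : Y × W →ₗ[𝕜] E) := by
    rw [ContinuousLinearMap.range_coprod]
    simp
  -- the addition map `Y × W → E` is bounded below, hence has closed range
  have hanti : AntilipschitzWith (1 + C) T := by
    refine T.antilipschitz_of_bound fun ⟨y, w⟩ => ?_
    have hy := h y y.2 w w.2
    have hw : ‖(w : E)‖ ≤ ‖(y + w : E)‖ + ‖(y : E)‖ := by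
      simpa using norm_sub_le (y + w : E) y
    simp only [Prod.norm_def, T, ContinuousLinearMap.coprod_apply, Submodule.subtypeL_apply,
      Submodule.coe_norm, max_le_iff]
    push_cast
    constructor <;> nlinarith [norm_nonneg (y + w : E), C.2]
  rw [hT, LinearMap.coe_range]
  exact hanti.isClosed_range T.uniformContinuous

section Dual

variable {X : Type*} [NormedAddCommGroup X] [NormedSpace ℝ X]

theorem isClosed_preAnn (Z : Submodule ℝ (X →L[ℝ] ℝ)) : IsClosed (preAnn Z : Set X) := by
  have : (preAnn Z : Set X) = ⋂ f ∈ Z, {x | f x = 0} := by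
    ext; simp [preAnn]
  rw [this]
  exact isClosed_biInter fun f _ => isClosed_eq f.continuous continuous_const

theorem mem_of_forall_preAnn_eq_zero {Z : Submodule ℝ (X →L[ℝ] ℝ)} (hZw : WeakStarClosed Z)
    {f : X →L[ℝ] ℝ} (hf : ∀ x ∈ preAnn Z, f x = 0) : f ∈ Z := by
  let M : Submodule ℝ (WeakDual ℝ X) := Z.map StrongDual.toWeakDual.toLinearMap
  have hM : (M : Set (WeakDual ℝ X)) = StrongDual.toWeakDual '' (Z : Set (X →L[ℝ] ℝ)) :=
    Submodule.map_coe _ _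
  have : LocallyConvexSpace ℝ (WeakDual ℝ X) := WeakBilin.locallyConvexSpace
  by_contra hfZ
  have hfM : StrongDual.toWeakDual f ∉ M := by
    rintro ⟨g, hg, hgf⟩
    exact hfZ (StrongDual.toWeakDual.injective hgf ▸ hg)
  obtain ⟨φ, hφM, hφf⟩ := M.exists_strongDual_eq_zero_of_notMem (hM ▸ hZw) hfM
  -- every weak-* continuous functional on `X*` is evaluation at a point of `X`
  obtain ⟨x, rfl⟩ := LinearMap.dualEmbedding_surjective _ φ
  exact hφf (hf x fun g hg => hφM _ (Submodule.mem_map_of_mem hg))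

theorem NormAttainingFor.norm_le_norm_add {Y : Submodule ℝ X} {Z : Submodule ℝ (X →L[ℝ] ℝ)}
    (hZ : NormAttainingFor Y Z) {y w : X} (hy : y ∈ Y) (hw : w ∈ preAnn Z) :
    ‖y‖ ≤ ‖y + w‖ := by
  rcases eq_or_ne y 0 with rfl | hy0
  · simp
  have hny : 0 < ‖y‖ := norm_pos_iff.2 hy0
  obtain ⟨f, hfZ, hf1, hfy⟩ := hZ (‖y‖⁻¹ • y) (Y.smul_mem _ hy)
    (by rw [norm_smul, norm_inv, norm_norm, inv_mul_cancel₀ hny.ne'])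
  have hfy' : f y = ‖y‖ := by
    rw [map_smul, smul_eq_mul, inv_mul_eq_one₀ hny.ne'] at hfy
    exact hfy.symm
  calc ‖y‖ = f (y + w) := by rw [map_add, hw f hfZ, add_zero, hfy']
    _ ≤ ‖f‖ * ‖y + w‖ := (le_abs_self _).trans (f.le_opNorm _)
    _ = ‖y + w‖ := by rw [hf1, one_mul]

end Dual

/-- If `Z` is a weak*-closed subspace of `X*` which is norm-attaining for a closed subspace
`Y` of `X` and moreover `Y^⊥ ∩ Z = {0}`, then `Y + Z^⊤ = X`. -/
theorem normAttainingFor_sup_preAnn_eq_top (X : Type*) [NormedAddCommGroup X]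
    [NormedSpace ℝ X] [CompleteSpace X] (Y : Submodule ℝ X) (hY : IsClosed (Y : Set X))
    (Z : Submodule ℝ (X →L[ℝ] ℝ)) (hZw : WeakStarClosed Z) (hZ : NormAttainingFor Y Z)
    (hYZ : ∀ f ∈ Z, (∀ y ∈ Y, f y = 0) → f = 0) :
    Y ⊔ preAnn Z = ⊤ := by
  have hclosed : IsClosed ((Y ⊔ preAnn Z : Submodule ℝ X) : Set X) :=
    Submodule.isClosed_sup_of_norm_le_mul_norm_add hY (isClosed_preAnn Z) 1 fun y hy w hw => by
      simpa using hZ.norm_le_norm_add hy hw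
  refine Submodule.eq_top_of_isClosed_of_forall_strongDual hclosed fun f hf => ?_
  exact hYZ f (mem_of_forall_preAnn_eq_zero hZw fun x hx => hf x (Submodule.mem_sup_right hx))
    fun y hy => hf y (Submodule.mem_sup_left hy)
end

section
/- The real space ℓ₁ of absolutely summable sequences is not k-self-extensible for any k < 3/2; in particular, ℓ₁ fails the self-extension property, and se(ℓ₁) ≥ 3/2. -/
open scoped ENNReal

/-- For `k ≥ 1`, a real Banach space `X` is **`k`-self-extensible** if every continuous linear
operator on a closed subspace of `X` extends to an operator on `X` of norm at most `k` times
the original norm. -/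
def KSelfExt (X : Type*) [NormedAddCommGroup X] [NormedSpace ℝ X] (k : ℝ) : Prop :=
  ∀ (Y : Submodule ℝ X), IsClosed (Y : Set X) → ∀ T : Y →L[ℝ] Y,
    ∃ S : X →L[ℝ] X, (∀ y : Y, S y = (T y : X)) ∧ ‖S‖ ≤ k * ‖T‖

/-- A real Banach space `X` has the **self-extension property** if every continuous linear
operator on a closed subspace of `X` extends to an operator on `X` with the same norm. -/
def SelfExt (X : Type*) [NormedAddCommGroup X] [NormedSpace ℝ X] : Prop :=
  ∀ (Y : Submodule ℝ X), IsClosed (Y : Set X) → ∀ T : Y →L[ℝ] Y,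
    ∃ S : X →L[ℝ] X, (∀ y : Y, S y = (T y : X)) ∧ ‖S‖ = ‖T‖

/-- `se X = inf {k ≥ 1 : X is k-self-extensible}`, with value `∞` when no such `k` exists. -/
noncomputable def se (X : Type*) [NormedAddCommGroup X] [NormedSpace ℝ X] : ℝ≥0∞ :=
  sInf {c : ℝ≥0∞ | ∃ k : ℝ, 1 ≤ k ∧ c = ENNReal.ofReal k ∧ KSelfExt X k}

/-!
Let `Y = {y ∈ ℓ¹ | y₀ + ⋯ + y₅ = 0}` and
`A y = (y₁ + y₂)(e₃ - e₀) + (y₁ + y₃)(e₄ - e₁) + (y₂ + y₃)(e₅ - e₂)`, which maps `ℓ¹` into `Y`.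
On `Y` we have `y₁ + y₂ + y₃ = -(y₀ + y₄ + y₅)`, so Hlawka's inequality
`|a + b| + |a + c| + |b + c| ≤ |a| + |b| + |c| + |a + b + c|` gives `‖A y‖ ≤ 2 ‖y‖`.
An extension `S` of `A|Y` satisfies `S eⱼ = S e₀ - qⱼ` with `qⱼ = A (e₀ - eⱼ)`, `j = 1, 2, 3`.
In each of the coordinates `0, …, 5`, two of `0, q₁, q₂, q₃` vanish and the other two are
equal to the same `±1`, so `‖S e₀‖ + ‖S e₁‖ + ‖S e₂‖ + ‖S e₃‖ ≥ 6 · 2`, i.e. `‖S‖ ≥ 3`,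
whereas `k ‖A|Y‖ ≤ 2k < 3` for `k < 3/2`.
-/

section General

variable {X : Type*} [NormedAddCommGroup X] [NormedSpace ℝ X]

theorem SelfExt.kSelfExt_one (h : SelfExt X) : KSelfExt X 1 := fun Y hY T ↦ by
  obtain ⟨S, hST, hS⟩ := h Y hY T
  exact ⟨S, hST, by rw [hS, one_mul]⟩

theorem ofReal_le_se_of_forall_not_kSelfExt {c : ℝ} (h : ∀ k < c, ¬ KSelfExt X k) :
    ENNReal.ofReal c ≤ se X := by
  refine le_sInf ?_
  rintro _ ⟨k, -, rfl, hk⟩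
  exact ENNReal.ofReal_le_ofReal (not_lt.1 fun hkc ↦ h k hkc hk)

theorem not_kSelfExt_of_le_norm_extension {Y : Submodule ℝ X} (hY : IsClosed (Y : Set X))
    (T : Y →L[ℝ] Y) {a b k : ℝ} (hT : ‖T‖ ≤ a) (hb : 0 < b) (hk : k * a < b)
    (hext : ∀ S : X →L[ℝ] X, (∀ y : Y, S y = (T y : X)) → b ≤ ‖S‖) : ¬ KSelfExt X k := by
  intro hX
  obtain ⟨S, hST, hS⟩ := hX Y hY T
  have hbS := hext S hST
  rcases le_or_gt k 0 with hk0 | hk0 <;> nlinarith [norm_nonneg T]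

end General

theorem lp.sum_norm_le_norm_one {α : Type*} {E : α → Type*} [∀ i, NormedAddCommGroup (E i)]
    (f : lp E 1) (s : Finset α) : ∑ i ∈ s, ‖f i‖ ≤ ‖f‖ := by
  simpa using lp.sum_rpow_le_norm_rpow (by norm_num) f s

theorem abs_hlawka (a b c : ℝ) :
    |a + b| + |a + c| + |b + c| ≤ |a| + |b| + |c| + |a + b + c| := by
  rcases abs_cases (a + b) with ⟨h1, _⟩ | ⟨h1, _⟩ <;>
  rcases abs_cases (a + c) with ⟨h2, _⟩ | ⟨h2, _⟩ <;>
  rcases abs_cases (b + c) with ⟨h3, _⟩ | ⟨h3, _⟩ <;>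
  rcases abs_cases (a + b + c) with ⟨h4, _⟩ | ⟨h4, _⟩ <;>
  rcases abs_cases a with ⟨h5, _⟩ | ⟨h5, _⟩ <;>
  rcases abs_cases b with ⟨h6, _⟩ | ⟨h6, _⟩ <;>
  rcases abs_cases c with ⟨h7, _⟩ | ⟨h7, _⟩ <;>
  linarith

local notation "ℓ¹" => lp (fun _ : ℕ => ℝ) 1

namespace L1Example

noncomputable section

def e (i : ℕ) : ℓ¹ := lp.single 1 i 1

def coord (i : ℕ) : ℓ¹ →L[ℝ] ℝ := lp.evalCLM ℝ _ 1 i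

@[simp] theorem coord_apply (i : ℕ) (x : ℓ¹) : coord i x = x i := rfl

@[simp] theorem e_apply (i j : ℕ) : e i j = if j = i then 1 else 0 := by
  simp [e, Pi.single_apply]

theorem norm_e (i : ℕ) : ‖e i‖ = 1 := by
  simp [e]

theorem norm_e_sub_e_le (i j : ℕ) : ‖e i - e j‖ ≤ 2 := by
  have := norm_sub_le (e i) (e j)
  rw [norm_e, norm_e] at this
  linarith

def A : ℓ¹ →L[ℝ] ℓ¹ :=
  (coord 1 + coord 2).smulRight (e 3 - e 0) + (coord 1 + coord 3).smulRight (e 4 - e 1) +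
    (coord 2 + coord 3).smulRight (e 5 - e 2)

theorem A_apply (x : ℓ¹) (i : ℕ) : A x i =
    (x 1 + x 2) * ((if i = 3 then 1 else 0) - (if i = 0 then 1 else 0)) +
      (x 1 + x 3) * ((if i = 4 then 1 else 0) - (if i = 1 then 1 else 0)) +
      (x 2 + x 3) * ((if i = 5 then 1 else 0) - (if i = 2 then 1 else 0)) := by
  simp only [A, add_apply, ContinuousLinearMap.smulRight_apply, coord_apply,
    lp.coeFn_add, lp.coeFn_sub, lp.coeFn_smul, Pi.add_apply, Pi.sub_apply, Pi.smul_apply,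
    smul_eq_mul, e_apply]

def σ : ℓ¹ →L[ℝ] ℝ := ∑ i ∈ Finset.range 6, coord i

theorem σ_apply (x : ℓ¹) : σ x = ∑ i ∈ Finset.range 6, x i := by
  simp only [σ, sum_apply, coord_apply]

def Y : Submodule ℝ ℓ¹ := LinearMap.ker (σ : ℓ¹ →ₗ[ℝ] ℝ)

theorem isClosed_Y : IsClosed (Y : Set ℓ¹) := σ.isClosed_ker

theorem mem_Y {x : ℓ¹} : x ∈ Y ↔ ∑ i ∈ Finset.range 6, x i = 0 := by
  rw [← σ_apply]; rfl

theorem A_mem_Y (x : ℓ¹) : A x ∈ Y := by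
  rw [mem_Y]
  simp only [Finset.sum_range_succ, Finset.sum_range_zero, A_apply]
  norm_num
  ring

theorem e_zero_sub_e_mem_Y {j : ℕ} (hj : j < 6) : e 0 - e j ∈ Y := by
  rw [mem_Y]
  simp only [Finset.sum_range_succ, Finset.sum_range_zero, lp.coeFn_sub, Pi.sub_apply, e_apply]
  interval_cases j <;> norm_num

theorem norm_A_le {y : ℓ¹} (hy : y ∈ Y) : ‖A y‖ ≤ 2 * ‖y‖ := by
  have hsum : y 1 + y 2 + y 3 = -(y 0 + y 4 + y 5) := by
    rw [mem_Y] at hy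
    simp only [Finset.sum_range_succ, Finset.sum_range_zero] at hy
    linarith
  have hA : A y = (y 1 + y 2) • (e 3 - e 0) + (y 1 + y 3) • (e 4 - e 1) +
      (y 2 + y 3) • (e 5 - e 2) := rfl
  calc ‖A y‖ ≤ |y 1 + y 2| * 2 + |y 1 + y 3| * 2 + |y 2 + y 3| * 2 := by
        rw [hA]
        refine (norm_add₃_le ..).trans ?_
        simp only [norm_smul, Real.norm_eq_abs]
        gcongr <;> exact norm_e_sub_e_le _ _
    _ ≤ 2 * (|y 1| + |y 2| + |y 3| + |y 0 + y 4 + y 5|) := by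
        have := abs_hlawka (y 1) (y 2) (y 3)
        rw [hsum, abs_neg] at this
        linarith
    _ ≤ 2 * ∑ i ∈ Finset.range 6, ‖y i‖ := by
        simp only [Finset.sum_range_succ, Finset.sum_range_zero, Real.norm_eq_abs]
        linarith [abs_add_three (y 0) (y 4) (y 5)]
    _ ≤ 2 * ‖y‖ := by gcongr; exact lp.sum_norm_le_norm_one y _

def T : Y →L[ℝ] Y := (A.comp Y.subtypeL).codRestrict Y fun y ↦ A_mem_Y y

theorem norm_T_le : ‖T‖ ≤ 2 :=
  T.opNorm_le_bound zero_le_two fun y ↦ norm_A_le y.2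

theorem two_le_abs_sub_A_e_zero_sub_e (t : ℝ) {i : ℕ} (hi : i < 6) :
    2 ≤ |t| + |t - A (e 0 - e 1) i| + |t - A (e 0 - e 2) i| + |t - A (e 0 - e 3) i| := by
  interval_cases i <;> simp [A_apply] <;>
  rcases abs_cases t with ⟨h1, _⟩ | ⟨h1, _⟩ <;> rcases abs_cases (t - 1) with ⟨h2, _⟩ | ⟨h2, _⟩ <;>
    rcases abs_cases (t + 1) with ⟨h3, _⟩ | ⟨h3, _⟩ <;> linarith

theorem three_le_norm_of_extends {S : ℓ¹ →L[ℝ] ℓ¹} (hS : ∀ y : Y, S y = (T y : ℓ¹)) :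
    3 ≤ ‖S‖ := by
  have hSe : ∀ j < 6, S (e j) = S (e 0) - A (e 0 - e j) := fun j hj ↦ by
    have h : S (e 0) - S (e j) = A (e 0 - e j) := by
      rw [← map_sub]; exact hS ⟨_, e_zero_sub_e_mem_Y hj⟩
    rw [← h, sub_sub_cancel]
  have hnorm : ∀ j, ‖S (e j)‖ ≤ ‖S‖ := fun j ↦ by
    simpa [norm_e] using S.le_opNorm (e j)
  have hcoord : ∀ i ∈ Finset.range 6, (2 : ℝ) ≤
      ‖S (e 0) i‖ + ‖S (e 1) i‖ + ‖S (e 2) i‖ + ‖S (e 3) i‖ := fun i hi ↦ by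
    simp only [hSe 1 (by norm_num), hSe 2 (by norm_num), hSe 3 (by norm_num), lp.coeFn_sub,
      Pi.sub_apply, Real.norm_eq_abs]
    exact two_le_abs_sub_A_e_zero_sub_e _ (Finset.mem_range.1 hi)
  have := Finset.sum_le_sum hcoord
  simp only [Finset.sum_add_distrib, Finset.sum_const, Finset.card_range, nsmul_eq_mul,
    Nat.cast_ofNat] at this
  linarith [lp.sum_norm_le_norm_one (S (e 0)) (Finset.range 6),
    lp.sum_norm_le_norm_one (S (e 1)) (Finset.range 6),
    lp.sum_norm_le_norm_one (S (e 2)) (Finset.range 6),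
    lp.sum_norm_le_norm_one (S (e 3)) (Finset.range 6), hnorm 0, hnorm 1, hnorm 2, hnorm 3]

theorem not_kSelfExt {k : ℝ} (hk : k < 3 / 2) : ¬ KSelfExt ℓ¹ k :=
  not_kSelfExt_of_le_norm_extension isClosed_Y T norm_T_le three_pos (by linarith)
    fun _ ↦ three_le_norm_of_extends

end

end L1Example

/-- The real space `ℓ₁` is not `k`-self-extensible for any `k < 3/2`; in particular it fails
the self-extension property, and `se(ℓ₁) ≥ 3/2`. -/
theorem l1_fails_selfExt :
    (∀ k : ℝ, k < 3 / 2 → ¬ KSelfExt (lp (fun _ : ℕ => ℝ) 1) k) ∧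
      ¬ SelfExt (lp (fun _ : ℕ => ℝ) 1) ∧
      ENNReal.ofReal (3 / 2) ≤ se (lp (fun _ : ℕ => ℝ) 1) :=
  ⟨fun _ ↦ L1Example.not_kSelfExt, fun h ↦ L1Example.not_kSelfExt (by norm_num) h.kSelfExt_one,
    ofReal_le_se_of_forall_not_kSelfExt fun _ ↦ L1Example.not_kSelfExt⟩
end
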